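/- Define M_n(x) by the recursion M_0(x) = x + 3 and M_n(x) = M_{n-1}(f(x)) · ((x+1)(x+3))^{3^{n-1}} where f(x) = (x^2-x+4)/(x+3). Then each M_n is a polynomial with integer coefficients (the rational function on the right-hand side is a polynomial). -/

import Mathlib

noncomputable def fmap (x : ℂ) : ℂ := (x ^ 2 - x + 4) / (x + 3)

noncomputable def M : ℕ → ℂ → ℂ
  | 0 => fun x => x + 3
  | n + 1 => fun x => M n (fmap x) * ((x + 1) * (x + 3)) ^ (3 ^ n)

open Polynomial in
lemma aux (n : ℕ) :
    ∃ P : Polynomial ℤ, P.natDegree ≤ 3 ^ n ∧ ∀ x : ℂ, (∀ j < n, fmap^[j] x ≠ -3) →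
      M n x = Polynomial.aeval x P := by
  induction n with
  | zero =>
    refine ⟨X + C 3, le_of_eq (by simpa using natDegree_X_add_C (3 : ℤ)), ?_⟩
    intro x _
    simp [M, Polynomial.aeval_C, map_ofNat]
  | succ n ih =>
    obtain ⟨P, hdeg, hP⟩ := ih
    set Q : Polynomial ℤ := (X + 1) ^ (3 ^ n) *
      ∑ i ∈ Finset.range (3 ^ n + 1),
        C (P.coeff i) * (X ^ 2 - X + 4) ^ i * (X + 3) ^ (3 ^ n - i) with hQ
    refine ⟨Q, ?_, ?_⟩
    · have h1 : ((X : ℤ[X]) + 1).natDegree ≤ 1 := by compute_degree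
      have h2 : ((X : ℤ[X]) ^ 2 - X + 4).natDegree ≤ 2 := by compute_degree
      have h3 : ((X : ℤ[X]) + 3).natDegree ≤ 1 := by compute_degree
      have hs : (∑ i ∈ Finset.range (3 ^ n + 1),
          C (P.coeff i) * (X ^ 2 - X + 4) ^ i * (X + 3) ^ (3 ^ n - i)).natDegree ≤ 2 * 3 ^ n := by
        apply Polynomial.natDegree_sum_le_of_forall_le
        intro i hi
        simp only [Finset.mem_range] at hi
        calc (C (P.coeff i) * (X ^ 2 - X + 4) ^ i * (X + 3) ^ (3 ^ n - i)).natDegree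
            ≤ (C (P.coeff i) * (X ^ 2 - X + 4) ^ i).natDegree
              + ((X + 3 : ℤ[X]) ^ (3 ^ n - i)).natDegree := natDegree_mul_le
          _ ≤ ((C (P.coeff i)).natDegree + (((X : ℤ[X]) ^ 2 - X + 4) ^ i).natDegree)
              + ((X + 3 : ℤ[X]) ^ (3 ^ n - i)).natDegree := by
              gcongr; exact natDegree_mul_le
          _ ≤ (0 + i * 2) + (3 ^ n - i) * 1 := by
              gcongr
              · exact le_of_eq (natDegree_C _)
              · exact natDegree_pow_le_of_le i h2
              · exact natDegree_pow_le_of_le _ h3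
          _ ≤ 2 * 3 ^ n := by omega
      calc Q.natDegree ≤ (((X : ℤ[X]) + 1) ^ 3 ^ n).natDegree + _ := natDegree_mul_le
        _ ≤ 3 ^ n * 1 + 2 * 3 ^ n := by
            gcongr
            exact natDegree_pow_le_of_le _ h1
        _ = 3 ^ (n + 1) := by ring
    · intro x hx
      have hx3 : x + 3 ≠ 0 := by
        have := hx 0 (Nat.succ_pos n)
        simp only [Function.iterate_zero, id_eq] at this
        intro h; exact this (by linear_combination h)
      have hfx : ∀ j < n, fmap^[j] (fmap x) ≠ -3 := by
        intro j hj
        have := hx (j + 1) (by omega)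
        simpa [Function.iterate_succ_apply] using this
      have hM : M (n + 1) x = (Polynomial.aeval (fmap x) P) * ((x + 1) * (x + 3)) ^ (3 ^ n) := by
        simp only [M]
        rw [hP _ hfx]
      rw [hM]
      have hsum : Polynomial.aeval (fmap x) P
          = ∑ i ∈ Finset.range (3 ^ n + 1), (P.coeff i : ℂ) * (fmap x) ^ i := by
        rw [Polynomial.aeval_eq_sum_range' (by omega : P.natDegree < 3 ^ n + 1)]
        simp [zsmul_eq_mul]
      have hQev : Polynomial.aeval x Q = (x + 1) ^ (3 ^ n) *
          ∑ i ∈ Finset.range (3 ^ n + 1),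
            (P.coeff i : ℂ) * (x ^ 2 - x + 4) ^ i * (x + 3) ^ (3 ^ n - i) := by
        simp [hQ, Polynomial.aeval_C, map_ofNat]
      rw [hsum, hQev, Finset.sum_mul, Finset.mul_sum]
      apply Finset.sum_congr rfl
      intro i hi
      simp only [Finset.mem_range] at hi
      have hpow : (x + 3) ^ (3 ^ n) = (x + 3) ^ i * (x + 3) ^ (3 ^ n - i) := by
        rw [← pow_add]; congr 1; omega
      rw [fmap, div_pow, mul_pow, hpow]
      field_simp

theorem stmt2 (n : ℕ) :
    ∃ P : Polynomial ℤ, ∀ x : ℂ, (∀ j < n, fmap^[j] x ≠ -3) →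
      M n x = Polynomial.aeval x P := by
  obtain ⟨P, _, h⟩ := aux n
  exact ⟨P, h⟩
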